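/- arXiv:1308.3778 — 5 statements merged into one kernel-verified Lean document; each statement's English description precedes it below -/
import Mathlib

section
/- In a finite normal-form game, for every player i and every k, the set NSD_i^k(Γ) is nonempty; in particular, any strategy maximizing the minimum payoff min_{τ ∈ NSD_{-i}^k(Γ)} u_i(·,τ) over NSD_i^k(Γ) survives round k+1 of the deletion process. -/
/-!
Fix `k` and let `σ₀` maximize `minv` with respect to `Opp (NSD u k) i` over all of player `i`'s
strategies. If some `σ'` minimax dominated `σ₀` with respect to `Opp (NSD u m) i`, `m ≤ k`, it would
also do so with respect to the smaller set `Opp (NSD u k) i`, and then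
`minv σ' > maxv σ₀ ≥ minv σ₀ ≥ minv σ'`. So `σ₀` survives all rounds up to `k + 1`, which gives
nonemptiness by induction on `k`. As `σ₀ ∈ NSD u k i`, a maximizer over `NSD u k i` only is a
global maximizer as well, hence survives too.
-/

open Function

section
variable {ι : Type*} [DecidableEq ι] {S : ι → Type*}

noncomputable def minv (u : ι → (∀ j, S j) → ℝ) (i : ι) (T : Set (∀ j, S j)) (σ : S i) : ℝ :=
  sInf ((fun τ => u i (Function.update τ i σ)) '' T)

noncomputable def maxv (u : ι → (∀ j, S j) → ℝ) (i : ι) (T : Set (∀ j, S j)) (σ : S i) : ℝ :=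
  sSup ((fun τ => u i (Function.update τ i σ)) '' T)

/-- `σ'` minimax dominates `σ` for player `i` w.r.t. opponent profile set `T`. -/
def MMDomBy (u : ι → (∀ j, S j) → ℝ) (i : ι) (T : Set (∀ j, S j)) (σ σ' : S i) : Prop :=
  minv u i T σ' > maxv u i T σ

def MMDom (u : ι → (∀ j, S j) → ℝ) (i : ι) (T : Set (∀ j, S j)) (σ : S i) : Prop :=
  ∃ σ' : S i, MMDomBy u i T σ σ'

/-- Opponent profiles of player `i` compatible with the product set `Z`. -/
def Opp (Z : ∀ j, Set (S j)) (i : ι) : Set (∀ j, S j) := {τ | ∀ j, j ≠ i → τ j ∈ Z j}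

/-- Iterated deletion of minimax dominated strategies. -/
noncomputable def NSD (u : ι → (∀ j, S j) → ℝ) : ℕ → ∀ i, Set (S i)
  | 0, _ => Set.univ
  | (k+1), i => {σ ∈ NSD u k i | ¬ MMDom u i (Opp (NSD u k) i) σ}

variable (u : ι → (∀ j, S j) → ℝ) (i : ι)

theorem nsd_antitone : Antitone fun k => NSD u k i :=
  antitone_nat_of_succ_le fun _ _ hσ => hσ.1

theorem opp_nsd_antitone : Antitone fun k => Opp (NSD u k) i :=
  fun _ _ hmk _ hτ j hj => nsd_antitone u j hmk (hτ j hj)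

theorem opp_nsd_nonempty {k : ℕ} (hne : ∀ j, (NSD u k j).Nonempty) :
    (Opp (NSD u k) i).Nonempty :=
  ⟨fun j => (hne j).some, fun j _ => (hne j).some_mem⟩

section Finite
variable [Finite ι] [∀ j, Finite (S j)] {u i} {T T' : Set (∀ j, S j)}

theorem minv_le_maxv (hT : T.Nonempty) (σ : S i) : minv u i T σ ≤ maxv u i T σ :=
  csInf_le_csSup (hT.image _) (Set.toFinite _).bddBelow (Set.toFinite _).bddAbove

theorem MMDomBy.mono {σ σ' : S i} (h : MMDomBy u i T' σ σ') (hTT' : T ⊆ T') (hT : T.Nonempty) :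
    MMDomBy u i T σ σ' :=
  calc maxv u i T σ ≤ maxv u i T' σ :=
        csSup_le_csSup (Set.toFinite _).bddAbove (hT.image _) (Set.image_mono hTT')
    _ < minv u i T' σ' := h
    _ ≤ minv u i T σ' :=
        csInf_le_csInf (Set.toFinite _).bddBelow (hT.image _) (Set.image_mono hTT')

theorem not_mmDomBy_of_minv_le {σ σ' : S i} (hT : T.Nonempty) (h : minv u i T σ' ≤ minv u i T σ) :
    ¬ MMDomBy u i T σ σ' :=
  fun hdom => (minv_le_maxv hT σ).not_gt (GT.gt.lt hdom |>.trans_le h)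

theorem mem_nsd_succ_of_forall_minv_le {k : ℕ} (hne : ∀ j, (NSD u k j).Nonempty) {σ : S i}
    (hσ : ∀ σ', minv u i (Opp (NSD u k) i) σ' ≤ minv u i (Opp (NSD u k) i) σ) :
    σ ∈ NSD u (k + 1) i := by
  suffices ∀ m ≤ k + 1, σ ∈ NSD u m i from this _ le_rfl
  intro m hm
  induction m with
  | zero => trivial
  | succ m ih =>
    refine ⟨ih (by omega), fun ⟨σ', hdom⟩ => ?_⟩
    have hT := opp_nsd_nonempty u i hne
    exact not_mmDomBy_of_minv_le hT (hσ σ')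
      (hdom.mono (opp_nsd_antitone u i (by omega : m ≤ k)) hT)

variable [∀ j, Nonempty (S j)]

theorem nsd_nonempty (k : ℕ) (i : ι) : (NSD u k i).Nonempty := by
  induction k generalizing i with
  | zero => exact ⟨Classical.arbitrary _, trivial⟩
  | succ k ih =>
    obtain ⟨σ, hσ⟩ := Finite.exists_max (minv u i (Opp (NSD u k) i))
    exact ⟨σ, mem_nsd_succ_of_forall_minv_le ih hσ⟩

end Finite

variable {ι : Type*} [Fintype ι] [DecidableEq ι] {S : ι → Type*}
  [∀ i, Fintype (S i)] [∀ i, Nonempty (S i)]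

theorem nsd_nonempty_maximin_survives (u : ι → (∀ j, S j) → ℝ) (i : ι) (k : ℕ) :
    (NSD u k i).Nonempty ∧
    ∀ σ ∈ NSD u k i,
      (∀ σ' ∈ NSD u k i,
        minv u i (Opp (NSD u k) i) σ' ≤ minv u i (Opp (NSD u k) i) σ) →
      σ ∈ NSD u (k+1) i := by
  refine ⟨nsd_nonempty k i, fun σ _ hmax => ?_⟩
  obtain ⟨σ₀, hσ₀⟩ := Finite.exists_max (minv u i (Opp (NSD u k) i))
  have hσ₀_mem : σ₀ ∈ NSD u k i := (mem_nsd_succ_of_forall_minv_le (nsd_nonempty k) hσ₀).1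
  exact mem_nsd_succ_of_forall_minv_le (nsd_nonempty k) fun σ' => (hσ₀ σ').trans (hmax σ₀ hσ₀_mem)


end
end

section
/- In a finite normal-form game there exists K such that NSD^K(Γ) = NSD^{K+1}(Γ), and hence NSD^k(Γ) = NSD^K(Γ) = NSD^∞(Γ) for all k ≥ K, where NSD^∞(Γ) = ⋂_k NSD^k(Γ); moreover NSD^∞(Γ) is nonempty. -/
/-! The sets `NSD u k` decrease with `k` in a finite lattice, so they stabilize. Every stage is
nonempty: a best response `σ` to an opponent profile `τ` taken from the previous stage is never
minimax dominated, since any rival `σ'` has worst case at most `u (σ', τ) ≤ u (σ, τ)`, and this is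
at most the best case of `σ`. -/

open Function

section
variable {ι : Type*} [DecidableEq ι] {S : ι → Type*}

lemma NSD_antitone (u : ι → (∀ j, S j) → ℝ) : Antitone (NSD u) :=
  antitone_nat_of_succ_le fun _ _ _ hσ => hσ.1

lemma not_MMDom_of_isBestResponse (u : ι → (∀ j, S j) → ℝ) {i : ι} {T : Set (∀ j, S j)}
    (hT : T.Finite) {τ : ∀ j, S j} (hτ : τ ∈ T) {σ : S i}
    (hσ : ∀ σ', u i (update τ i σ') ≤ u i (update τ i σ)) : ¬ MMDom u i T σ := by
  rintro ⟨σ', hdom⟩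
  have hmin : minv u i T σ' ≤ u i (update τ i σ') :=
    csInf_le (hT.image _).bddBelow ⟨τ, hτ, rfl⟩
  have hmax : u i (update τ i σ) ≤ maxv u i T σ :=
    le_csSup (hT.image _).bddAbove ⟨τ, hτ, rfl⟩
  exact (hmin.trans ((hσ σ').trans hmax)).not_gt hdom

lemma mem_NSD_succ_of_isBestResponse [Finite (∀ j, S j)] (u : ι → (∀ j, S j) → ℝ) {i : ι}
    {τ : ∀ j, S j} {σ : S i} (hσ : ∀ σ', u i (update τ i σ') ≤ u i (update τ i σ)) :
    ∀ n, τ ∈ Opp (NSD u n) i → σ ∈ NSD u (n + 1) i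
  | 0, hτ => ⟨trivial, not_MMDom_of_isBestResponse u (Set.toFinite _) hτ hσ⟩
  | n + 1, hτ =>
    ⟨mem_NSD_succ_of_isBestResponse u hσ n fun j hj => NSD_antitone u n.le_succ j (hτ j hj),
      not_MMDom_of_isBestResponse u (Set.toFinite _) hτ hσ⟩

lemma NSD_nonempty [Finite ι] [∀ i, Finite (S i)] [∀ i, Nonempty (S i)]
    (u : ι → (∀ j, S j) → ℝ) : ∀ k i, (NSD u k i).Nonempty
  | 0, _ => Set.univ_nonempty
  | k + 1, i => by
    choose τ hτ using NSD_nonempty u k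
    obtain ⟨σ, hσ⟩ := Finite.exists_max fun σ => u i (update τ i σ)
    exact ⟨σ, mem_NSD_succ_of_isBestResponse u hσ k fun j _ => hτ j⟩

lemma iInter_eq_of_antitone_of_forall_ge_eq {α : Type*} {s : ℕ → Set α} (hs : Antitone s)
    {K : ℕ} (hK : ∀ k, K ≤ k → s k = s K) : ⋂ k, s k = s K :=
  (Set.iInter_subset _ K).antisymm <| Set.subset_iInter fun k =>
    (le_total k K).elim (fun h => hs h) fun h => (hK k h).ge

variable {ι : Type*} [Fintype ι] [DecidableEq ι] {S : ι → Type*}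
  [∀ i, Fintype (S i)] [∀ i, Nonempty (S i)]

theorem nsd_stabilizes (u : ι → (∀ j, S j) → ℝ) :
    ∃ K : ℕ,
      (∀ i, NSD u (K+1) i = NSD u K i) ∧
      (∀ k, K ≤ k → ∀ i, NSD u k i = NSD u K i) ∧
      (∀ i, NSD u K i = ⋂ k, NSD u k i) ∧
      (∀ i, (⋂ k, NSD u k i).Nonempty) := by
  obtain ⟨K, hK⟩ := WellFoundedLT.antitone_chain_condition (NSD_antitone u)
  have hstable : ∀ k, K ≤ k → ∀ i, NSD u k i = NSD u K i :=
    fun k hk i => congrFun (hK k hk).symm i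
  have hinter : ∀ i, ⋂ k, NSD u k i = NSD u K i := fun i =>
    iInter_eq_of_antitone_of_forall_ge_eq (fun _ _ h => NSD_antitone u h i)
      fun k hk => hstable k hk i
  refine ⟨K, hstable (K + 1) K.le_succ, hstable, fun i => (hinter i).symm, fun i => ?_⟩
  rw [hinter i]
  exact NSD_nonempty u K i

end
end

section
/- In the two-player 'reverse traveler's dilemma' game where each player announces an integer in {1,...,k} (k ≥ 2) and payoffs are u(x,y) = (y + 1/2, y) if x > y, (x, x + 1/2) if y > x, and (x,x) if x = y, exactly the strategy profile (k,k) survives iterated deletion of minimax dominated strategies; more precisely, for 0 ≤ j ≤ k−1, NSD^j consists of all profiles (x,y) with j+1 ≤ x,y ≤ k. -/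
/-!
In announcements `x, y ∈ {1, …, k}` the payoff is `min x (y + 1/2)`. Suppose both players are
confined to announcements `≥ m`. Announcing `m` then earns exactly `m`, while announcing `m + 1`
earns at least `m + 1/2`, so `m` is minimax dominated as soon as `m < k`. An announcement `x > m`,
or `x = k`, is not dominated: it earns `x` against itself, whereas any rival earns at most
`min x' (m + 1/2) ≤ x` against `m`. So every round deletes exactly the lowest announcement, until
only `k` is left, after which nothing changes.
-/

open Function

section
variable {ι : Type*} [DecidableEq ι] {S : ι → Type*}

/-- Reverse traveler's dilemma with announcements 1..k (strategy `a : Fin k` announces `a+1`). -/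
noncomputable def rtd (k : ℕ) : Fin 2 → (Fin 2 → Fin k) → ℝ := fun i σ =>
  let x : ℕ := (σ i : ℕ) + 1
  let y : ℕ := (σ (i + 1) : ℕ) + 1
  if x > y then (y : ℝ) + 1/2 else (x : ℝ)

theorem Set.Finite.csSup_lt_csInf_iff {α : Type*} [ConditionallyCompleteLinearOrder α]
    {s t : Set α} (hs : s.Finite) (ht : t.Finite)
    (hs₀ : s.Nonempty) (ht₀ : t.Nonempty) : sSup s < sInf t ↔ ∀ x ∈ s, ∀ y ∈ t, x < y := by
  simp only [hs.csSup_lt_iff hs₀, ht.lt_csInf_iff ht₀]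

section NSD

variable (u : ι → (∀ j, S j) → ℝ)

theorem NSD_succ (n : ℕ) :
    NSD u (n + 1) = fun i => {σ ∈ NSD u n i | ¬ MMDom u i (Opp (NSD u n) i) σ} :=
  rfl

theorem NSD_antitone_s7 (i : ι) : Antitone fun n => NSD u n i :=
  antitone_nat_of_succ_le fun _ _ h => h.1

theorem NSD_eq_of_succ_eq {n : ℕ} (h : NSD u (n + 1) = NSD u n) {m : ℕ} (hm : n ≤ m) :
    NSD u m = NSD u n := by
  induction m, hm using Nat.le_induction with
  | base => rfl
  | succ m _ ih => rw [NSD_succ, ih, ← NSD_succ, h]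

theorem iInter_NSD_eq_of_succ_eq {n : ℕ} (h : NSD u (n + 1) = NSD u n) (i : ι) :
    ⋂ m, NSD u m i = NSD u n i := by
  refine (Set.iInter_subset _ n).antisymm (Set.subset_iInter fun m => ?_)
  rcases le_total m n with hm | hm
  · exact NSD_antitone_s7 u i hm
  · rw [NSD_eq_of_succ_eq u h hm]

end NSD

namespace RTD

variable {k : ℕ}

/-- The payoff of `rtd` for announcing `a + 1` against `b + 1`, in closed form. -/
noncomputable def payoff (a b : Fin k) : ℝ := min ((a : ℝ) + 1) ((b : ℝ) + 3 / 2)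

def atLeast (k j : ℕ) : Set (Fin k) := {a | j ≤ (a : ℕ)}

theorem rtd_update (i : Fin 2) (σ : Fin k) (τ : Fin 2 → Fin k) :
    rtd k i (update τ i σ) = payoff σ (τ (i + 1)) := by
  have hne : i + 1 ≠ i := by revert i; decide
  simp only [rtd, payoff, update_self, update_of_ne hne, gt_iff_lt, add_lt_add_iff_right]
  split_ifs with h
  · rw [min_eq_right] <;> push_cast
    · ring
    · have : ((τ (i + 1) : ℕ) : ℝ) + 1 ≤ σ := by exact_mod_cast h
      linarith
  · have : (σ : ℝ) ≤ (τ (i + 1) : ℕ) := by exact_mod_cast not_lt.mp h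
    rw [min_eq_left (by linarith)]
    push_cast
    ring

theorem image_Opp (i : Fin 2) (Z : Fin 2 → Set (Fin k)) (σ : Fin k) :
    (fun τ => rtd k i (update τ i σ)) '' Opp Z i = payoff σ '' Z (i + 1) := by
  have hne : i + 1 ≠ i := by revert i; decide
  have hother : ∀ j : Fin 2, j ≠ i → j = i + 1 := by revert i; decide
  ext r
  constructor
  · rintro ⟨τ, hτ, rfl⟩
    exact ⟨τ (i + 1), hτ _ hne, (rtd_update i σ τ).symm⟩
  · rintro ⟨b, hb, rfl⟩
    exact ⟨fun _ => b, fun j hj => hother j hj ▸ hb, rtd_update i σ _⟩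

theorem mmDomBy_Opp_iff {i : Fin 2} {Z : Fin 2 → Set (Fin k)} (hZ : (Z (i + 1)).Nonempty)
    (σ σ' : Fin k) :
    MMDomBy (rtd k) i (Opp Z i) σ σ' ↔
      ∀ b ∈ Z (i + 1), ∀ c ∈ Z (i + 1), payoff σ b < payoff σ' c := by
  rw [MMDomBy, minv, maxv, image_Opp, image_Opp, gt_iff_lt,
    Set.Finite.csSup_lt_csInf_iff (Set.toFinite _) (Set.toFinite _) (hZ.image _) (hZ.image _)]
  simp only [Set.forall_mem_image]

theorem not_mmDom_atLeast_iff (i : Fin 2) {j : ℕ} {a : Fin k} (ha : j ≤ a) :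
    ¬ MMDom (rtd k) i (Opp (fun _ => atLeast k j) i) a ↔ j < a ∨ (a : ℕ) + 1 = k := by
  simp only [MMDom, not_exists, mmDomBy_Opp_iff (Z := fun _ => atLeast k j) ⟨a, ha⟩]
  constructor
  · intro hnd
    by_contra! hlow
    have ha : (a : ℝ) = j := by exact_mod_cast le_antisymm hlow.1 ha
    refine hnd ⟨j + 1, by omega⟩ fun b _ c hc => ?_
    have hc : (j : ℝ) ≤ c := by exact_mod_cast hc
    calc payoff a b ≤ (j : ℝ) + 1 := ha ▸ min_le_left _ _
      _ < (j : ℝ) + 3 / 2 := by linarith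
      _ ≤ payoff ⟨j + 1, _⟩ c := le_min (by push_cast; linarith) (by linarith)
  · intro hhigh σ' hdom
    have hj : j < k := by omega
    refine (hdom a ha ⟨j, hj⟩ (Nat.le_refl j)).not_ge ?_
    calc payoff σ' ⟨j, hj⟩ ≤ (a : ℝ) + 1 := by
          rcases hhigh with hja | htop
          · have : (j : ℝ) + 1 ≤ a := by exact_mod_cast hja
            exact (min_le_right _ _).trans (by simp only; linarith)
          · have : (σ' : ℝ) + 1 ≤ k := by exact_mod_cast σ'.isLt
            have : (a : ℝ) + 1 = k := by exact_mod_cast htop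
            exact (min_le_left _ _).trans (by linarith)
      _ = payoff a a := (min_eq_left (by linarith)).symm

theorem mem_NSD_succ_iff {j : ℕ} (h : NSD (rtd k) j = fun _ => atLeast k j) (i : Fin 2)
    (a : Fin k) : a ∈ NSD (rtd k) (j + 1) i ↔ j ≤ a ∧ (j < a ∨ (a : ℕ) + 1 = k) := by
  rw [NSD_succ, h]
  exact and_congr_right (not_mmDom_atLeast_iff i)

theorem NSD_eq_atLeast : ∀ j ≤ k - 1, NSD (rtd k) j = fun _ => atLeast k j
  | 0, _ => funext fun _ => (Set.eq_univ_of_forall (s := atLeast k 0) fun a => Nat.zero_le a).symm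
  | j + 1, hj => funext fun i => Set.ext fun a => by
    rw [mem_NSD_succ_iff (NSD_eq_atLeast j (by omega)) i a, atLeast, Set.mem_ofPred_eq]
    omega

theorem NSD_stable : NSD (rtd k) (k - 1 + 1) = NSD (rtd k) (k - 1) := by
  funext i
  ext a
  rw [mem_NSD_succ_iff (NSD_eq_atLeast _ le_rfl), NSD_eq_atLeast _ le_rfl, atLeast,
    Set.mem_ofPred_eq]
  omega

end RTD

theorem rtd_iterated_deletion_general (k : ℕ) :
    (∀ j : ℕ, j ≤ k - 1 → ∀ i : Fin 2,
      NSD (rtd k) j i = {a : Fin k | j ≤ (a : ℕ)}) ∧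
    (∀ i : Fin 2, (⋂ m : ℕ, NSD (rtd k) m i) = {a : Fin k | (a : ℕ) = k - 1}) := by
  refine ⟨fun j hj i => by rw [RTD.NSD_eq_atLeast j hj]; rfl, fun i => ?_⟩
  rw [iInter_NSD_eq_of_succ_eq _ RTD.NSD_stable, RTD.NSD_eq_atLeast _ le_rfl]
  ext a
  rw [RTD.atLeast, Set.mem_ofPred_eq, Set.mem_ofPred_eq]
  omega

theorem rtd_iterated_deletion (k : ℕ) (hk : 2 ≤ k) :
    (∀ j : ℕ, j ≤ k - 1 → ∀ i : Fin 2,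
      NSD (rtd k) j i = {a : Fin k | j ≤ (a : ℕ)}) ∧
    (∀ i : Fin 2, (⋂ m : ℕ, NSD (rtd k) m i) = {a : Fin k | (a : ℕ) = k - 1}) :=
  rtd_iterated_deletion_general k

end
end

section
/- In the two-player reverse traveler's dilemma with k ≥ 3 actions (payoffs u(x,y) = (y + 1/2, y) if x > y, (x, x + 1/2) if y > x, (x,x) if x = y), the profile (2,2) is individually rational but does not survive two rounds of iterated deletion of minimax dominated strategies; hence individually rational profiles need not survive iterated minimax deletion. -/
open Function

section
variable {ι : Type*} [DecidableEq ι] {S : ι → Type*}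

/-- `σ` is individually rational: each player gets at least their maximin value. -/
noncomputable def IRprof {ι : Type*} [DecidableEq ι] {S : ι → Type*}
    (u : ι → (∀ j, S j) → ℝ) (σ : ∀ j, S j) : Prop :=
  ∀ i, u i σ ≥ sSup (Set.range fun σ' : S i =>
    minv u i (Opp (fun j => (Set.univ : Set (S j))) i) σ')

/-
Announcing 1 is minimax dominated by announcing 2 (worst case 3/2 against best case 1), and nothing
else is deleted in the first round, since any announcement `x ≥ 2` earns `x` against itself while
every strategy earns at most 3/2 against 1. Once 1 is gone, announcing 2 earns at most 2, while
announcing 3 earns at least 5/2 against every remaining opponent. The profile (2,2) is nevertheless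
individually rational: the opponent can hold every player to 3/2 by announcing 1.
-/

section MinimaxBounds

variable {u : ι → (∀ j, S j) → ℝ} {i : ι} {T : Set (∀ j, S j)} {σ σ' : S i} {τ : ∀ j, S j}

lemma minv_le_apply (hT : T.Finite) (hτ : τ ∈ T) : minv u i T σ ≤ u i (update τ i σ) :=
  csInf_le (hT.image _).bddBelow ⟨τ, hτ, rfl⟩

lemma apply_le_maxv (hT : T.Finite) (hτ : τ ∈ T) : u i (update τ i σ) ≤ maxv u i T σ :=
  le_csSup (hT.image _).bddAbove ⟨τ, hτ, rfl⟩

lemma mmDomBy_of_bounds {a b : ℝ} (hT : T.Nonempty) (hσ : ∀ τ ∈ T, u i (update τ i σ) ≤ a)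
    (hσ' : ∀ τ ∈ T, b ≤ u i (update τ i σ')) (hab : a < b) : MMDomBy u i T σ σ' := by
  have hmax : maxv u i T σ ≤ a := csSup_le (hT.image _) (by rintro _ ⟨τ, hτ, rfl⟩; exact hσ τ hτ)
  have hmin : b ≤ minv u i T σ' := le_csInf (hT.image _) (by rintro _ ⟨τ, hτ, rfl⟩; exact hσ' τ hτ)
  exact hmax.trans_lt (hab.trans_le hmin)

lemma not_mmDom_of_forall_exists_le (hT : T.Finite) (hτ : τ ∈ T)
    (h : ∀ σ', ∃ τ' ∈ T, u i (update τ' i σ') ≤ u i (update τ i σ)) : ¬ MMDom u i T σ := by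
  rintro ⟨σ', hdom⟩
  obtain ⟨τ', hτ', hle⟩ := h σ'
  have := (minv_le_apply hT hτ').trans (hle.trans (apply_le_maxv hT hτ))
  exact absurd hdom this.not_gt

end MinimaxBounds

lemma mem_NSD_succ {u : ι → (∀ j, S j) → ℝ} {n : ℕ} {i : ι} {σ : S i} :
    σ ∈ NSD u (n + 1) i ↔ σ ∈ NSD u n i ∧ ¬ MMDom u i (Opp (NSD u n) i) σ := Iff.rfl

namespace Fin

lemma two_add_one_ne_self (i : Fin 2) : i + 1 ≠ i := by revert i; decide

lemma two_eq_add_one_of_ne {i j : Fin 2} (h : j ≠ i) : j = i + 1 := by revert i j; decide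

end Fin

lemma mem_Opp_fin_two {α : Type*} {Z : Fin 2 → Set α} {i : Fin 2} {τ : Fin 2 → α} :
    τ ∈ Opp Z i ↔ τ (i + 1) ∈ Z (i + 1) :=
  ⟨fun h => h _ (Fin.two_add_one_ne_self i),
    fun h j hj => by rw [Fin.two_eq_add_one_of_ne hj]; exact h⟩

namespace rtd

variable {k : ℕ}

lemma update_eq_min (i : Fin 2) (τ : Fin 2 → Fin k) (a : Fin k) :
    rtd k i (update τ i a) = min ((a : ℕ) + 1 : ℝ) ((τ (i + 1) : ℕ) + 3 / 2) := by
  simp only [rtd, update_self, update_of_ne (Fin.two_add_one_ne_self i)]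
  split_ifs with h
  · have : ((τ (i + 1) : ℕ) : ℝ) + 1 ≤ (a : ℕ) := by norm_cast; omega
    rw [min_eq_right (by linarith)]
    push_cast; ring
  · rw [min_eq_left]
    · push_cast; ring
    · have : ((a : ℕ) : ℝ) ≤ (τ (i + 1) : ℕ) := by norm_cast; omega
      linarith

lemma le_three_halves_of_opp_zero (i : Fin 2) (τ : Fin 2 → Fin k) (hτ : (τ (i + 1) : ℕ) = 0)
    (a : Fin k) : rtd k i (update τ i a) ≤ 3 / 2 := by
  rw [update_eq_min, hτ]
  exact (min_le_right _ _).trans (by norm_num)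

lemma NSD_one (hk : 2 ≤ k) (i : Fin 2) : NSD (rtd k) 1 i = {a : Fin k | (a : ℕ) ≠ 0} := by
  ext a
  have hall : ∀ τ, τ ∈ Opp (NSD (rtd k) 0) i := fun _ _ _ => trivial
  simp only [mem_NSD_succ, Set.mem_ofPred_eq]
  refine ⟨fun h => ?_, fun ha => ⟨trivial, ?_⟩⟩
  · intro ha
    refine h.2 ⟨⟨1, by omega⟩, mmDomBy_of_bounds (a := 1) (b := 3 / 2) ⟨_, hall (fun _ => a)⟩
      (fun τ _ => ?_) (fun τ _ => ?_) (by norm_num)⟩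
    · rw [update_eq_min, ha]
      exact (min_le_left _ _).trans (by norm_num)
    · rw [update_eq_min]
      exact le_min (by norm_num) (le_add_of_nonneg_left (Nat.cast_nonneg _))
  · refine not_mmDom_of_forall_exists_le (τ := fun _ => a) (Set.toFinite _) (hall _)
      fun σ' => ⟨fun _ => ⟨0, by omega⟩, hall _, (le_three_halves_of_opp_zero i _ rfl σ').trans ?_⟩
    rw [update_eq_min]
    have : (1 : ℝ) ≤ (a : ℕ) := by norm_cast; omega
    exact le_min (by linarith) (by linarith)

lemma IRprof_const_one (hk : 2 ≤ k) : IRprof (rtd k) (fun _ => (⟨1, hk⟩ : Fin k)) := by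
  intro i
  have hval : rtd k i (fun _ => ⟨1, hk⟩) = 2 := by simp [rtd]
  have hlow : (fun _ => ⟨0, by omega⟩) ∈ Opp (fun j => (Set.univ : Set (Fin k))) i :=
    fun _ _ => trivial
  rw [hval]
  refine Real.sSup_le ?_ (by norm_num)
  rintro _ ⟨σ', rfl⟩
  calc minv (rtd k) i _ σ' ≤ rtd k i (update (fun _ => ⟨0, by omega⟩) i σ') :=
        minv_le_apply (Set.toFinite _) hlow
    _ ≤ 3 / 2 := le_three_halves_of_opp_zero i _ rfl σ'
    _ ≤ 2 := by norm_num

lemma one_not_mem_NSD_two (hk : 2 < k) (i : Fin 2) : (⟨1, by omega⟩ : Fin k) ∉ NSD (rtd k) 2 i := by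
  intro hmem
  have hopp : ∀ τ ∈ Opp (NSD (rtd k) 1) i, (τ (i + 1) : ℕ) ≠ 0 := fun τ hτ => by
    rwa [mem_Opp_fin_two, NSD_one (by omega)] at hτ
  refine (mem_NSD_succ.mp hmem).2 ⟨⟨2, by omega⟩, mmDomBy_of_bounds (a := 2) (b := 5 / 2)
    ⟨fun _ => ⟨1, by omega⟩, ?_⟩ (fun τ _ => ?_) (fun τ hτ => ?_) (by norm_num)⟩
  · rw [mem_Opp_fin_two, NSD_one (by omega)]
    exact one_ne_zero
  · rw [update_eq_min]
    exact (min_le_left _ _).trans (by norm_num)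
  · have : (1 : ℝ) ≤ (τ (i + 1) : ℕ) := by have := hopp τ hτ; norm_cast; omega
    rw [update_eq_min]
    exact le_min (by norm_num) (by linarith)

end rtd

theorem rtd_ir_not_surviving (k : ℕ) (hk : 3 ≤ k) :
    IRprof (rtd k) (fun _ => (⟨1, by omega⟩ : Fin k)) ∧
    (∀ i : Fin 2, (⟨1, by omega⟩ : Fin k) ∉ NSD (rtd k) 2 i) :=
  ⟨rtd.IRprof_const_one (by omega), rtd.one_not_mem_NSD_two hk⟩

end
end

section
/- In the 2×2 game with row strategies {a,b}, column strategies {c,d}, and payoffs u(a,c) = (100,0), u(a,d) = (100,0), u(b,c) = (150,0), u(b,d) = (50,0), every strategy profile survives iterated deletion of minimax dominated strategies, but the profile (b,d) is not individually rational. -/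
open Function

section
variable {ι : Type*} [DecidableEq ι] {S : ι → Type*}

/-- Row player is `false`, column player `true`; row strategies `a = false`, `b = true`;
column strategies `c = false`, `d = true`. -/
noncomputable def game11 : Bool → (Bool → Bool) → ℝ := fun i σ =>
  if i then 0
  else if σ false then (if σ true then 50 else 150) else 100

/-!
No strategy is ever deleted: for either player and any strategies `σ, σ'`, the payoff of `σ'`
against the all-`true` profile is at most that of `σ` against the all-`false` one, so the worst
case of `σ'` never beats the best case of `σ`, already in the first round. Yet strategy `a`
guarantees the row player `100`, more than the `50` of `(b, d)`.
-/

variable {u : ι → (∀ j, S j) → ℝ} {i : ι} {T : Set (∀ j, S j)} {τ : ∀ j, S j}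

omit [DecidableEq ι] in
@[simp]
theorem opp_univ (i : ι) : Opp (fun j => (Set.univ : Set (S j))) i = Set.univ := by
  ext τ
  simp [Opp]

theorem minv_le (hT : T.Finite) (hτ : τ ∈ T) (σ : S i) :
    minv u i T σ ≤ u i (update τ i σ) :=
  csInf_le (hT.image _).bddBelow (Set.mem_image_of_mem _ hτ)

theorem le_maxv (hT : T.Finite) (hτ : τ ∈ T) (σ : S i) :
    u i (update τ i σ) ≤ maxv u i T σ :=
  le_csSup (hT.image _).bddAbove (Set.mem_image_of_mem _ hτ)

theorem le_minv {c : ℝ} {σ : S i} (hT : T.Nonempty) (h : ∀ τ ∈ T, c ≤ u i (update τ i σ)) :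
    c ≤ minv u i T σ :=
  le_csInf (hT.image _) (Set.forall_mem_image.2 h)

theorem not_mmDomBy_of_le {τ' : ∀ j, S j} {σ σ' : S i} (hT : T.Finite) (hτ : τ ∈ T)
    (hτ' : τ' ∈ T) (h : u i (update τ i σ') ≤ u i (update τ' i σ)) :
    ¬ MMDomBy u i T σ σ' :=
  not_lt.2 <| (minv_le hT hτ σ').trans <| h.trans (le_maxv hT hτ' σ)

theorem nsd_eq_univ_of_forall_not_mmDom (h : ∀ i σ, ¬ MMDom u i Set.univ σ) :
    ∀ k i, NSD u k i = Set.univ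
  | 0, _ => rfl
  | k + 1, i => by
    have hk : NSD u k = fun j => Set.univ := funext (nsd_eq_univ_of_forall_not_mmDom h k)
    ext σ
    simpa [NSD, hk] using h i σ

theorem not_IRprof_of_lt_minv [Finite (S i)] {σ : ∀ j, S j} (σ' : S i)
    (h : u i σ < minv u i Set.univ σ') : ¬ IRprof u σ := fun hIR =>
  (hIR i).not_gt <| h.trans_le <| by
    simpa using le_csSup (Set.finite_range _).bddAbove (Set.mem_range_self σ')

theorem game11_update_le (i σ σ' : Bool) :
    game11 i (update (fun _ => true) i σ') ≤ game11 i (update (fun _ => false) i σ) := by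
  cases i <;> cases σ <;> cases σ' <;> norm_num [game11]

theorem game11_update_false_false (τ : Bool → Bool) : game11 false (update τ false false) = 100 := by
  simp [game11]

theorem game11_survives_but_not_ir :
    (∀ (k : ℕ) (i : Bool), NSD game11 k i = Set.univ) ∧
    ¬ IRprof game11 (fun _ => true) := by
  refine ⟨nsd_eq_univ_of_forall_not_mmDom fun i σ ⟨σ', hσ'⟩ => ?_, ?_⟩
  · exact not_mmDomBy_of_le Set.finite_univ (Set.mem_univ _) (Set.mem_univ _)
      (game11_update_le i σ σ') hσ'
  · refine not_IRprof_of_lt_minv (i := false) false ?_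
    calc game11 false (fun _ => true) = 50 := by simp [game11]
      _ < 100 := by norm_num
      _ ≤ minv game11 false Set.univ false :=
        le_minv Set.univ_nonempty fun τ _ => (game11_update_false_false τ).ge

end
end
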